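/- arXiv:2409.13487 — 4 statements merged into one kernel-verified Lean document; each statement's English description precedes it below -/
import Mathlib

section
/- If the first syzygy H of the R-module R_S (that is, the kernel in a short exact sequence 0 → H → P → R_S → 0 with P projective) is S-strongly flat, then the class of S-weakly cotorsion R-modules is closed under cokernels of monomorphisms (i.e., it is coresolving). -/
open CategoryTheory

universe u

variable (R : Type u) [CommRing R]

/-- `Ext^n_R(M, N) = 0`. -/
def extVanish (n : ℕ) (M N : Type u) [AddCommGroup M] [Module R M]
    [AddCommGroup N] [Module R N] : Prop :=
  Subsingleton (((Ext R (ModuleCat.{u} R) n).obj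
    (Opposite.op (ModuleCat.of R M))).obj (ModuleCat.of R N))

/-- `C` is `S`-weakly cotorsion if `Ext^1_R(R_S, C) = 0`. -/
def IsWeaklyCotorsion (S : Submonoid R) (C : Type u) [AddCommGroup C] [Module R C] : Prop :=
  extVanish R 1 (Localization S) C

/-- `F` is `S`-strongly flat if `Ext^1_R(F, C) = 0` for all `S`-weakly cotorsion `C`. -/
def IsStronglyFlat (S : Submonoid R) (F : Type u) [AddCommGroup F] [Module R F] : Prop :=
  ∀ (C : Type u) [AddCommGroup C] [Module R C], IsWeaklyCotorsion R S C → extVanish R 1 F C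

/-!
Mathlib's `Ext` used in the definitions and the derived-category `Ext` vanish together in positive
degrees, since both are computed by the `Hom` complex of a projective resolution; the latter has
long exact sequences. Applying `Ext(R_S, -)` to `0 → A → B → C → 0` embeds `Ext^1(R_S, C)` into
`Ext^2(R_S, A)` because `Ext^1(R_S, B) = 0`, and applying `Ext(-, A)` to `0 → H → P → R_S → 0`
with `P` projective makes `Ext^1(H, A) → Ext^2(R_S, A)` surjective. Since `H` is `S`-strongly flat
and `A` is `S`-weakly cotorsion, `Ext^1(H, A) = 0`.
-/

universe w

namespace CategoryTheory.ProjectiveResolution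

variable {C : Type*} [Category* C] [Abelian C] {X : C} (P : ProjectiveResolution X) (Y : C)
  (n : ℕ)

theorem subsingleton_Ext_succ_iff (k : Type*) [Ring k] [Linear k C] [EnoughProjectives C] :
    Subsingleton (((Ext k C (n + 1)).obj (Opposite.op X)).obj Y) ↔
      ∀ φ : P.complex.X (n + 1) ⟶ Y, P.complex.d (n + 2) (n + 1) ≫ φ = 0 →
        ∃ ψ : P.complex.X n ⟶ Y, P.complex.d (n + 1) n ≫ ψ = φ := by
  rw [← ModuleCat.isZero_iff_subsingleton, (P.isoExt (n + 1) Y).isZero_iff,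
    ← HomologicalComplex.exactAt_iff_isZero_homology,
    HomologicalComplex.exactAt_iff' _ n (n + 1) (n + 2) (by simp) (by simp),
    ShortComplex.moduleCat_exact_iff]
  rfl

theorem subsingleton_abelianExt_succ_iff [HasExt.{w} C] :
    Subsingleton (Abelian.Ext.{w} X Y (n + 1)) ↔
      ∀ φ : P.complex.X (n + 1) ⟶ Y, P.complex.d (n + 2) (n + 1) ≫ φ = 0 →
        ∃ ψ : P.complex.X n ⟶ Y, P.complex.d (n + 1) n ≫ ψ = φ := by
  refine ⟨fun _ φ hφ ↦ (P.extMk_eq_zero_iff φ (n + 2) rfl hφ n rfl).1 (Subsingleton.elim _ _),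
    fun h ↦ subsingleton_of_forall_eq 0 fun α ↦ ?_⟩
  obtain ⟨φ, hφ, rfl⟩ := P.extMk_surjective α (n + 2) rfl
  exact (P.extMk_eq_zero_iff φ (n + 2) rfl hφ n rfl).2 (h φ hφ)

end CategoryTheory.ProjectiveResolution

theorem CategoryTheory.subsingleton_Ext_succ_iff_subsingleton_abelianExt {C : Type*}
    [Category* C] [Abelian C] (k : Type*) [Ring k] [Linear k C] [EnoughProjectives C]
    [HasExt.{w} C] (X Y : C) (n : ℕ) :
    Subsingleton (((Ext k C (n + 1)).obj (Opposite.op X)).obj Y) ↔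
      Subsingleton (Abelian.Ext.{w} X Y (n + 1)) := by
  let P := ProjectiveResolution.of X
  rw [P.subsingleton_Ext_succ_iff Y n k, P.subsingleton_abelianExt_succ_iff Y n]

namespace CategoryTheory.ShortComplex.ShortExact

open Abelian

variable {C : Type*} [Category* C] [Abelian C] [HasExt.{w} C] {S : ShortComplex C}

theorem subsingleton_ext_X₃ (hS : S.ShortExact) (X : C) (n : ℕ)
    (h₂ : Subsingleton (Ext.{w} X S.X₂ n)) (h₁ : Subsingleton (Ext.{w} X S.X₁ (n + 1))) :
    Subsingleton (Ext.{w} X S.X₃ n) := by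
  refine subsingleton_of_forall_eq 0 fun x₃ ↦ ?_
  obtain ⟨x₂, rfl⟩ := Ext.covariant_sequence_exact₃ X hS x₃ rfl (Subsingleton.elim _ _)
  rw [Subsingleton.elim x₂ 0, Ext.zero_comp]

theorem subsingleton_ext_X₃_succ_of_projective (hS : S.ShortExact) [Projective S.X₂] (Y : C)
    (n : ℕ) (h₁ : Subsingleton (Ext.{w} S.X₁ Y n)) : Subsingleton (Ext.{w} S.X₃ Y (n + 1)) := by
  refine subsingleton_of_forall_eq 0 fun x₃ ↦ ?_
  obtain ⟨x₁, rfl⟩ := Ext.contravariant_sequence_exact₃ hS Y x₃ (Ext.eq_zero_of_projective _)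
    (add_comm 1 n)
  rw [Subsingleton.elim x₁ 0, Ext.comp_zero]

end CategoryTheory.ShortComplex.ShortExact

theorem extVanish_succ_iff (n : ℕ) (M N : Type u) [AddCommGroup M] [Module R M]
    [AddCommGroup N] [Module R N] :
    extVanish R (n + 1) M N ↔
      Subsingleton (Abelian.Ext.{u} (ModuleCat.of R M) (ModuleCat.of R N) (n + 1)) :=
  subsingleton_Ext_succ_iff_subsingleton_abelianExt R _ _ n

/-- If the first syzygy `H` of `R_S` (kernel in `0 → H → P → R_S → 0`, `P` projective)
is `S`-strongly flat, then the class of `S`-weakly cotorsion modules is closed under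
cokernels of monomorphisms. -/
theorem weaklyCotorsion_coresolving (S : Submonoid R) (H P : Type u)
    [AddCommGroup H] [Module R H] [AddCommGroup P] [Module R P]
    (i : H →ₗ[R] P) (p : P →ₗ[R] Localization S)
    (hi : Function.Injective i) (hp : Function.Surjective p) (hip : Function.Exact i p)
    (hP : Module.Projective R P) (hH : IsStronglyFlat R S H) :
    ∀ (A B C : Type u) [AddCommGroup A] [Module R A] [AddCommGroup B] [Module R B]
      [AddCommGroup C] [Module R C] (f : A →ₗ[R] B) (g : B →ₗ[R] C),
      Function.Injective f → Function.Surjective g → Function.Exact f g →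
      IsWeaklyCotorsion R S A → IsWeaklyCotorsion R S B → IsWeaklyCotorsion R S C := by
  intro A B C _ _ _ _ _ _ f g hf hg hfg hA hB
  have : Projective (ModuleCat.of R P) := (IsProjective.iff_projective P).mp hP
  have hSyzygy := ModuleCat.shortComplex_shortExact
    (ModuleCat.shortComplexOfCompEqZero i p hip.linearMap_comp_eq_zero) hip hi hp
  have hABC := ModuleCat.shortComplex_shortExact
    (ModuleCat.shortComplexOfCompEqZero f g hfg.linearMap_comp_eq_zero) hfg hf hg
  have hExt₂ : Subsingleton (Abelian.Ext (ModuleCat.of R (Localization S)) (ModuleCat.of R A) 2) :=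
    hSyzygy.subsingleton_ext_X₃_succ_of_projective _ 1 ((extVanish_succ_iff R 0 H A).mp (hH A hA))
  exact (extVanish_succ_iff R 0 _ C).mpr
    (hABC.subsingleton_ext_X₃ _ 1 ((extVanish_succ_iff R 0 _ B).mp hB) hExt₂)
end

section
/- If the first syzygy of R_S is S-strongly flat, then Ext^n_R(F, C) = 0 for every S-strongly flat R-module F, every S-weakly cotorsion R-module C, and every n ≥ 1. -/
open CategoryTheory

universe u

variable (R : Type u) [CommRing R]

/-!
For `0 → C → I → D → 0` with `I` injective, the Hom complexes of a projective resolution of `F`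
form a short exact sequence of complexes whose middle term is exact in positive degrees, so
`Ext^{n+1}(F, C) = 0 ↔ Ext^n(F, D) = 0` for `n ≥ 1`. For `0 → H → P → R_S → 0` with `P`
projective, splicing a projective resolution of `H` onto `P` resolves `R_S`, and its Hom complexes
are those of `H` shifted by one, so `Ext^{m+2}(R_S, Y) = 0 ↔ Ext^{m+1}(H, Y) = 0`.

Hence if `C` is weakly cotorsion, `Ext^1(R_S, D) = 0 ↔ Ext^2(R_S, C) = 0 ↔ Ext^1(H, C) = 0`, and
the last holds because `H` is strongly flat: the cosyzygy `D` is again weakly cotorsion. Induction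
on `n` through `Ext^{n+1}(F, C) = 0 ↔ Ext^n(F, D) = 0` then gives the vanishing in all degrees.
-/

open Limits

section

variable {R}

section Abelian

variable {C : Type*} [Category* C] [Abelian C] [Linear R C]

noncomputable def ChainComplex.linearYonedaObjMap (X : ChainComplex C ℕ) {A B : C} (f : A ⟶ B) :
    X.linearYonedaObj R A ⟶ X.linearYonedaObj R B where
  f i := ((linearYoneda R C).map f).app (Opposite.op (X.X i))
  comm' i j _ := by
    ext (g : X.X i ⟶ A)
    exact (Category.assoc (X.d j i) g f).symm

noncomputable def ChainComplex.linearYonedaObjShortComplex (X : ChainComplex C ℕ)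
    (S : ShortComplex C) : ShortComplex (CochainComplex (ModuleCat R) ℕ) :=
  ShortComplex.mk (X.linearYonedaObjMap S.f) (X.linearYonedaObjMap S.g) (by
    ext i (g : X.X i ⟶ S.X₁)
    change (g ≫ S.f) ≫ S.g = 0
    simp)

lemma ChainComplex.shortExact_linearYonedaObjShortComplex (X : ChainComplex C ℕ)
    [∀ i, Projective (X.X i)] {S : ShortComplex C} (hS : S.ShortExact) :
    (X.linearYonedaObjShortComplex (R := R) S).ShortExact := by
  have := hS.mono_f
  have := hS.epi_g
  refine HomologicalComplex.shortExact_of_degreewise_shortExact _ fun i => ?_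
  refine { exact := ?_, mono_f := ?_, epi_g := ?_ }
  · rw [ShortComplex.moduleCat_exact_iff]
    intro (x : X.X i ⟶ S.X₂) (hx : x ≫ S.g = 0)
    exact ⟨hS.exact.lift x hx, hS.exact.lift_f x hx⟩
  · rw [ModuleCat.mono_iff_injective]
    exact fun (a b : X.X i ⟶ S.X₁) hab => (cancel_mono S.f).1 hab
  · rw [ModuleCat.epi_iff_surjective]
    exact fun (y : X.X i ⟶ S.X₃) => ⟨Projective.factorThru y S.g, Projective.factorThru_comp y S.g⟩

namespace CategoryTheory.ProjectiveResolution

variable {Z : C} (P : ProjectiveResolution Z)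

lemma isZero_homology_linearYonedaObj_succ_of_injective (J : C) [Injective J] (k : ℕ) :
    IsZero ((P.complex.linearYonedaObj R J).homology (k + 1)) := by
  rw [← HomologicalComplex.exactAt_iff_isZero_homology,
    HomologicalComplex.exactAt_iff' _ k (k + 1) (k + 2) (by simp) (by simp),
    ShortComplex.moduleCat_exact_iff]
  intro (x : P.complex.X (k + 1) ⟶ J) (hx : P.complex.d (k + 2) (k + 1) ≫ x = 0)
  exact ⟨(P.exact_succ k).descToInjective x hx, (P.exact_succ k).comp_descToInjective x hx⟩

/-- `P.π.f 0` has target `((single₀ C).obj Z).X 0`, which is `Z` only after unfolding, so its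
composites with morphisms out of `Z` do not rewrite; `π₀` has target `Z` itself. -/
noncomputable def π₀ : P.complex.X 0 ⟶ Z := P.π.f 0

lemma d_comp_π₀ : P.complex.d 1 0 ≫ P.π₀ = 0 := P.complex_d_comp_π_f_zero

lemma d_comp_π₀_assoc {W : C} (f : Z ⟶ W) : P.complex.d 1 0 ≫ P.π₀ ≫ f = 0 := by
  rw [← Category.assoc, d_comp_π₀, zero_comp]

instance : Epi P.π₀ := inferInstanceAs (Epi (P.π.f 0))

lemma exact_d_π₀ : (ShortComplex.mk _ _ P.d_comp_π₀).Exact := P.exact₀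

variable {S : ShortComplex C} (hS : S.ShortExact) (Q : ProjectiveResolution S.X₁)

noncomputable def spliceComplex : ChainComplex C ℕ :=
  Q.complex.augment (Q.π₀ ≫ S.f) (Q.d_comp_π₀_assoc S.f)

include hS in
lemma exact_π₀_comp_f_g : (ShortComplex.mk (Q.π₀ ≫ S.f) S.g (by simp)).Exact := by
  let φ : ShortComplex.mk (Q.π₀ ≫ S.f) S.g (by simp) ⟶ S := { τ₁ := Q.π₀, τ₂ := 𝟙 _, τ₃ := 𝟙 _ }
  have : Epi φ.τ₁ := inferInstanceAs (Epi Q.π₀)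
  exact (ShortComplex.exact_iff_of_epi_of_isIso_of_mono φ).2 hS.exact

include hS in
lemma spliceComplex_exactAt_succ (n : ℕ) : (spliceComplex Q).ExactAt (n + 1) := by
  rw [HomologicalComplex.exactAt_iff' _ (n + 2) (n + 1) n (by simp) (by simp)]
  cases n with
  | zero =>
    let φ : ShortComplex.mk _ _ Q.d_comp_π₀ ⟶ ShortComplex.mk _ _ (Q.d_comp_π₀_assoc S.f) :=
      { τ₁ := 𝟙 _, τ₂ := 𝟙 _, τ₃ := S.f }
    have : Mono φ.τ₃ := hS.mono_f
    exact (ShortComplex.exact_iff_of_epi_of_isIso_of_mono φ).1 Q.exact_d_π₀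
  | succ k => exact Q.exact_succ k

noncomputable def splice [Projective S.X₂] : ProjectiveResolution S.X₃ where
  complex := spliceComplex Q
  projective n := by
    cases n with
    | zero => exact ‹Projective S.X₂›
    | succ m => exact Q.projective m
  π := (ChainComplex.toSingle₀Equiv _ _).symm ⟨S.g, show (Q.π₀ ≫ S.f) ≫ S.g = 0 by simp⟩
  quasiIso := ⟨fun n => by
    cases n with
    | zero =>
      rw [ChainComplex.quasiIsoAt₀_iff, ShortComplex.quasiIso_iff_of_zeros']
      · refine (ShortComplex.exact_and_epi_g_iff_of_iso ?_).2
          ⟨exact_π₀_comp_f_g hS Q, hS.epi_g⟩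
        exact ShortComplex.isoMk (Iso.refl _) (Iso.refl _) (Iso.refl _)
          ((Category.id_comp _).trans (Category.comp_id _).symm)
          (by
            refine (Category.id_comp _).trans ?_
            erw [Category.comp_id]
            exact (ChainComplex.toSingle₀Equiv_symm_apply_f_zero (C := spliceComplex Q) S.g _).symm)
      all_goals rfl
    | succ n =>
      rw [quasiIsoAt_iff_exactAt' _ _ (ChainComplex.exactAt_succ_single_obj _ _)]
      exact spliceComplex_exactAt_succ hS Q n⟩

end CategoryTheory.ProjectiveResolution

noncomputable def ChainComplex.linearYonedaObjAugmentHomologyIso (X : ChainComplex C ℕ) {Z : C}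
    (f : X.X 0 ⟶ Z) (w : X.d 1 0 ≫ f = 0) (Y : C) (n : ℕ) :
    ((X.augment f w).linearYonedaObj R Y).homology (n + 2) ≅
      (X.linearYonedaObj R Y).homology (n + 1) :=
  HomologicalComplex.homologyIsoSc' _ (n + 1) (n + 2) (n + 3) (by simp) (by simp) ≪≫
    ShortComplex.homologyMapIso (ShortComplex.isoMk (Iso.refl _) (Iso.refl _) (Iso.refl _)
      (by simp; rfl) (by simp; rfl)) ≪≫
    (HomologicalComplex.homologyIsoSc' (X.linearYonedaObj R Y) n (n + 1) (n + 2)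
      (by simp) (by simp)).symm

variable [EnoughProjectives C]

lemma isZero_Ext_succ_iff_of_injective {S : ShortComplex C} (hS : S.ShortExact)
    [Injective S.X₂] (F : C) {n : ℕ} (hn : 1 ≤ n) :
    IsZero (((Ext R C (n + 1)).obj (Opposite.op F)).obj S.X₁) ↔
      IsZero (((Ext R C n).obj (Opposite.op F)).obj S.X₃) := by
  let P := ProjectiveResolution.of F
  have hT := P.complex.shortExact_linearYonedaObjShortComplex (R := R) hS
  have hmid := P.isZero_homology_linearYonedaObj_succ_of_injective (R := R) S.X₂
  have hrel : (ComplexShape.up ℕ).Rel n (n + 1) := rfl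
  rw [(P.isoExt _ _).isZero_iff, (P.isoExt _ _).isZero_iff]
  constructor
  · intro h₁
    obtain ⟨k, rfl⟩ : ∃ k, n = k + 1 := ⟨n - 1, by omega⟩
    exact (hT.homology_exact₃ _ _ hrel).isZero_X₂ ((hmid k).eq_of_src _ _) (h₁.eq_of_tgt _ _)
  · intro h₃
    exact (hT.homology_exact₁ _ _ hrel).isZero_X₂ (h₃.eq_of_src _ _) ((hmid n).eq_of_tgt _ _)

lemma isZero_Ext_succ_succ_iff_of_projective {S : ShortComplex C} (hS : S.ShortExact)
    [Projective S.X₂] (Y : C) (m : ℕ) :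
    IsZero (((Ext R C (m + 2)).obj (Opposite.op S.X₃)).obj Y) ↔
      IsZero (((Ext R C (m + 1)).obj (Opposite.op S.X₁)).obj Y) := by
  let Q := ProjectiveResolution.of S.X₁
  rw [((Q.splice hS).isoExt _ _).isZero_iff, (Q.isoExt _ _).isZero_iff]
  exact (ChainComplex.linearYonedaObjAugmentHomologyIso Q.complex _ (Q.d_comp_π₀_assoc S.f) Y
    m).isZero_iff

end Abelian

lemma extVanish_iff_isZero {n : ℕ} {M N : Type u} [AddCommGroup M] [Module R M]
    [AddCommGroup N] [Module R N] :
    extVanish R n M N ↔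
      IsZero (((Ext R (ModuleCat.{u} R) n).obj (Opposite.op (ModuleCat.of R M))).obj
        (ModuleCat.of R N)) :=
  ModuleCat.isZero_iff_subsingleton.symm

lemma extVanish_succ_iff_of_injective {C I D : Type u} [AddCommGroup C] [Module R C]
    [AddCommGroup I] [Module R I] [AddCommGroup D] [Module R D] [Module.Injective R I]
    {ι : C →ₗ[R] I} {q : I →ₗ[R] D} (hι : Function.Injective ι) (hq : Function.Surjective q)
    (hιq : Function.Exact ι q) (F : Type u) [AddCommGroup F] [Module R F] {n : ℕ}
    (hn : 1 ≤ n) : extVanish R (n + 1) F C ↔ extVanish R n F D := by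
  have := Module.injective_object_of_injective_module R I
  simp only [extVanish_iff_isZero]
  exact isZero_Ext_succ_iff_of_injective (ModuleCat.shortComplex_shortExact
    (ModuleCat.shortComplexOfCompEqZero ι q hιq.linearMap_comp_eq_zero) hιq hι hq) _ hn

lemma extVanish_succ_succ_iff_of_projective {H P M : Type u} [AddCommGroup H] [Module R H]
    [AddCommGroup P] [Module R P] [AddCommGroup M] [Module R M] [Module.Projective R P]
    {i : H →ₗ[R] P} {p : P →ₗ[R] M} (hi : Function.Injective i) (hp : Function.Surjective p)
    (hip : Function.Exact i p) (Y : Type u) [AddCommGroup Y] [Module R Y] (m : ℕ) :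
    extVanish R (m + 2) M Y ↔ extVanish R (m + 1) H Y := by
  have := (IsProjective.iff_projective P).1 ‹_›
  simp only [extVanish_iff_isZero]
  exact isZero_Ext_succ_succ_iff_of_projective (ModuleCat.shortComplex_shortExact
    (ModuleCat.shortComplexOfCompEqZero i p hip.linearMap_comp_eq_zero) hip hi hp) _ m

lemma Module.exists_injective_embedding (C : Type u) [AddCommGroup C] [Module R C] :
    ∃ (I : Type u) (_ : AddCommGroup I) (_ : Module R I) (_ : Module.Injective R I)
      (ι : C →ₗ[R] I), Function.Injective ι :=
  ⟨(Injective.under (ModuleCat.of R C) : ModuleCat.{u} R), inferInstance, inferInstance,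
    Module.injective_module_of_injective_object (inj := Injective.injective_under _),
    (Injective.ι (ModuleCat.of R C)).hom, (ModuleCat.mono_iff_injective _).1 inferInstance⟩

end

/-- If the first syzygy of `R_S` is `S`-strongly flat, then `Ext^n_R(F, C) = 0` for
every `S`-strongly flat `F`, every `S`-weakly cotorsion `C`, and every `n ≥ 1`. -/
theorem ext_vanish_of_syzygy_stronglyFlat (S : Submonoid R) (H P : Type u)
    [AddCommGroup H] [Module R H] [AddCommGroup P] [Module R P]
    (i : H →ₗ[R] P) (p : P →ₗ[R] Localization S)
    (hi : Function.Injective i) (hp : Function.Surjective p) (hip : Function.Exact i p)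
    (hP : Module.Projective R P) (hH : IsStronglyFlat R S H) :
    ∀ (n : ℕ), 1 ≤ n →
      ∀ (F C : Type u) [AddCommGroup F] [Module R F] [AddCommGroup C] [Module R C],
        IsStronglyFlat R S F → IsWeaklyCotorsion R S C → extVanish R n F C := by
  intro n hn
  induction n, hn using Nat.le_induction with
  | base => exact fun F C _ _ _ _ hF hC => hF C hC
  | succ n hn ih =>
    intro F C _ _ _ _ hF hC
    obtain ⟨I, _, _, _, ι, hι⟩ := Module.exists_injective_embedding (R := R) C
    have hq := (LinearMap.range ι).mkQ_surjective
    have hιq : Function.Exact ι (LinearMap.range ι).mkQ :=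
      LinearMap.exact_iff.2 (Submodule.ker_mkQ _)
    have hD : IsWeaklyCotorsion R S (I ⧸ LinearMap.range ι) :=
      (extVanish_succ_iff_of_injective hι hq hιq _ le_rfl).1
        ((extVanish_succ_succ_iff_of_projective hi hp hip C 0).2 (hH C hC))
    exact (extVanish_succ_iff_of_injective hι hq hιq F hn).2 (ih F _ hF hD)
end

section
/- If R_S is projective as an R-module, then the global S-strongly flat dimension of R equals the global (projective) dimension of R. -/
open CategoryTheory

universe u

variable (R : Type u) [CommRing R]

/-- The `S`-strongly flat dimension of `M`: the smallest `n` with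
`Ext^{n+1}_R(M, C) = 0` for every `S`-weakly cotorsion `C`, or `∞` otherwise. -/
noncomputable def sfdim (S : Submonoid R) (M : Type u) [AddCommGroup M] [Module R M] : ℕ∞ :=
  sInf {n : ℕ∞ | ∃ m : ℕ, n = m ∧
    ∀ (C : Type u) [AddCommGroup C] [Module R C],
      IsWeaklyCotorsion R S C → extVanish R (m + 1) M C}

/-- The projective dimension of `M`: the smallest `n` with `Ext^{n+1}_R(M, -) = 0`,
or `∞` if there is no such `n`. -/
noncomputable def pdim (M : Type u) [AddCommGroup M] [Module R M] : ℕ∞ :=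
  sInf {n : ℕ∞ | ∃ m : ℕ, n = m ∧
    ∀ (N : Type u) [AddCommGroup N] [Module R N], extVanish R (m + 1) M N}

theorem extVanish_succ_of_projective (n : ℕ) (P C : Type u) [AddCommGroup P] [Module R P]
    [Module.Projective R P] [AddCommGroup C] [Module R C] : extVanish R (n + 1) P C :=
  have : Projective (ModuleCat.of R P) := (IsProjective.iff_projective P).mp ‹_›
  ModuleCat.subsingleton_of_isZero (isZero_Ext_succ_of_projective _ _ n)

theorem isWeaklyCotorsion_of_projective (S : Submonoid R) [Module.Projective R (Localization S)]
    (C : Type u) [AddCommGroup C] [Module R C] : IsWeaklyCotorsion R S C :=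
  extVanish_succ_of_projective R 0 (Localization S) C

theorem sfdim_eq_pdim_of_projective (S : Submonoid R) [Module.Projective R (Localization S)]
    (M : Type u) [AddCommGroup M] [Module R M] : sfdim R S M = pdim R M := by
  simp only [sfdim, pdim, isWeaklyCotorsion_of_projective, forall_const]

/-- If `R_S` is projective as an `R`-module, then the global `S`-strongly flat
dimension of `R` (the supremum of `S-sfd(M)` over all `R`-modules `M`) equals the
global dimension of `R`. -/
theorem glsfdim_eq_gldim (S : Submonoid R) (h : Module.Projective R (Localization S)) :
    sInf {n : ℕ∞ | ∀ (M : Type u) [AddCommGroup M] [Module R M], sfdim R S M ≤ n}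
      = sInf {n : ℕ∞ | ∀ (M : Type u) [AddCommGroup M] [Module R M], pdim R M ≤ n} := by
  simp only [sfdim_eq_pdim_of_projective]
end

section
/- If every R-module is S-strongly flat, then every S-weakly cotorsion R-module is injective, and conversely. -/
open CategoryTheory

universe u

variable (R : Type u) [CommRing R]

/-!
Computed from a projective resolution `P` of `M`, `Ext¹(M, C)` is the group of `1`-cocycles
`P₁ ⟶ C` modulo those of the form `d₁ ≫ ψ`. A cocycle kills `im d₂ = ker d₁`, so if `C` is
injective it extends along `d₁`. Conversely, for an ideal `I` and `g : I ⟶ C`, lift the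
presentation `I ↪ R ↠ R/I` to `P`: `g` becomes a cocycle `α₁ ≫ g`, and its primitive
`ψ : P₀ ⟶ C`, composed with a section `s : R ⟶ P₀` and corrected by `g` on the defect
`s ≫ α₀ - 𝟙`, extends `g` to `R`; Baer's criterion makes `C` injective. So
`Ext¹(-, C) = 0` characterises injective `C`, and both sides of the theorem say that every
`S`-weakly cotorsion module has this property.
-/

namespace CategoryTheory

open Limits

variable {C : Type*} [Category* C] [Abelian C]

namespace ProjectiveResolution

variable {X : C} (P : ProjectiveResolution X)

lemma isZero_ext_one_iff (A : Type*) [Ring A] [Linear A C] [EnoughProjectives C] (Y : C) :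
    IsZero (((Ext A C 1).obj (Opposite.op X)).obj Y) ↔
      ∀ φ : P.complex.X 1 ⟶ Y, P.complex.d 2 1 ≫ φ = 0 →
        ∃ ψ : P.complex.X 0 ⟶ Y, P.complex.d 1 0 ≫ ψ = φ := by
  rw [(P.isoExt 1 Y).isZero_iff, ← HomologicalComplex.exactAt_iff_isZero_homology,
    HomologicalComplex.exactAt_iff' _ 0 1 2 (by simp) (by simp),
    ShortComplex.moduleCat_exact_iff]
  exact Iff.rfl

end ProjectiveResolution

lemma isZero_ext_one_of_injective (A : Type*) [Ring A] [Linear A C] [EnoughProjectives C]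
    (X J : C) [Injective J] : IsZero (((Ext A C 1).obj (Opposite.op X)).obj J) :=
  let P := projectiveResolution X
  (P.isZero_ext_one_iff A J).2 fun φ hφ =>
    ⟨(P.exact_succ 0).descToInjective φ hφ, (P.exact_succ 0).comp_descToInjective φ hφ⟩

lemma ShortComplex.ShortExact.exists_f_comp_eq {S : ShortComplex C} (hS : S.ShortExact)
    [Projective S.X₂] (P : ProjectiveResolution S.X₃) {J : C}
    (hJ : ∀ φ : P.complex.X 1 ⟶ J, P.complex.d 2 1 ≫ φ = 0 →
      ∃ ψ : P.complex.X 0 ⟶ J, P.complex.d 1 0 ≫ ψ = φ)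
    (g : S.X₁ ⟶ J) : ∃ h : S.X₂ ⟶ J, S.f ≫ h = g := by
  have := hS.mono_f
  have := hS.epi_g
  -- `P.π.f 0` has codomain `((ChainComplex.single₀ C).obj S.X₃).X 0`, only defeq to `S.X₃`;
  -- retyped so that `Projective.factorThru` finds `Epi S.g`.
  let π₀ : P.complex.X 0 ⟶ S.X₃ := P.π.f 0
  have : Epi π₀ := inferInstanceAs (Epi (P.π.f 0))
  obtain ⟨α₀, hα₀⟩ : ∃ α₀ : P.complex.X 0 ⟶ S.X₂, α₀ ≫ S.g = π₀ :=
    ⟨_, Projective.factorThru_comp π₀ S.g⟩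
  obtain ⟨α₁, hα₁⟩ : ∃ α₁ : P.complex.X 1 ⟶ S.X₁, α₁ ≫ S.f = P.complex.d 1 0 ≫ α₀ :=
    ⟨_, hS.exact.liftFromProjective_comp _
      (by rw [Category.assoc, hα₀]; exact P.complex_d_comp_π_f_zero)⟩
  have hdα₁ : P.complex.d 2 1 ≫ α₁ = 0 := by
    rw [← cancel_mono S.f, Category.assoc, hα₁, HomologicalComplex.d_comp_d_assoc, zero_comp,
      zero_comp]
  obtain ⟨ψ, hψ⟩ := hJ (α₁ ≫ g) (by rw [← Category.assoc, hdα₁, zero_comp])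
  obtain ⟨s, hs⟩ : ∃ s : S.X₂ ⟶ P.complex.X 0, s ≫ π₀ = S.g :=
    ⟨_, Projective.factorThru_comp S.g π₀⟩
  obtain ⟨τ, hτ⟩ : ∃ τ : S.X₂ ⟶ S.X₁, τ ≫ S.f = s ≫ α₀ - 𝟙 _ :=
    ⟨_, hS.exact.liftFromProjective_comp _ (by simp [hα₀, hs])⟩
  refine ⟨s ≫ ψ - τ ≫ g, ?_⟩
  -- `S.f ≫ s` lands in `ker π₀ = im d₁`, so it lifts to `P₁` after an epi refinement.
  obtain ⟨A, e, _, y, hy⟩ : ∃ (A : C) (e : A ⟶ S.X₁) (_ : Epi e) (y : A ⟶ P.complex.X 1),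
      e ≫ S.f ≫ s = y ≫ P.complex.d 1 0 := P.exact₀.exact_up_to_refinements (S.f ≫ s)
    (by rw [Category.assoc]; exact (congrArg (S.f ≫ ·) hs).trans S.zero)
  have hfτ : e ≫ S.f ≫ τ = y ≫ α₁ - e := by
    rw [← cancel_mono S.f, Category.assoc, Category.assoc, hτ, Preadditive.comp_sub,
      Preadditive.comp_sub, reassoc_of% hy, Category.comp_id, Preadditive.sub_comp,
      Category.assoc, hα₁]
  rw [← cancel_epi e]
  calc e ≫ S.f ≫ (s ≫ ψ - τ ≫ g) = (e ≫ S.f ≫ s) ≫ ψ - (e ≫ S.f ≫ τ) ≫ g := by simp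
    _ = y ≫ α₁ ≫ g - (y ≫ α₁ - e) ≫ g := by rw [hy, Category.assoc, hψ, hfτ]
    _ = e ≫ g := by simp

end CategoryTheory

open Limits

lemma Module.Baer.of_forall_isZero_ext_one {N : ModuleCat.{u} R}
    (hN : ∀ M : ModuleCat.{u} R,
      IsZero (((Ext R (ModuleCat.{u} R) 1).obj (Opposite.op M)).obj N)) :
    Module.Baer R N := by
  intro I g
  have hI := LinearMap.exact_subtype_mkQ I
  let S := ModuleCat.shortComplexOfCompEqZero I.subtype I.mkQ hI.linearMap_comp_eq_zero
  have hS : S.ShortExact :=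
    ModuleCat.shortComplex_shortExact S hI I.injective_subtype I.mkQ_surjective
  let P := projectiveResolution S.X₃
  obtain ⟨h, hh⟩ :=
    hS.exists_f_comp_eq P ((P.isZero_ext_one_iff R N).1 (hN _)) (ModuleCat.ofHom g)
  exact ⟨h.hom, fun x hx => congr($hh ⟨x, hx⟩)⟩

theorem forall_extVanish_one_iff_injective (N : Type u) [AddCommGroup N] [Module R N] :
    (∀ (M : Type u) [AddCommGroup M] [Module R M], extVanish R 1 M N) ↔ Module.Injective R N := by
  simp only [extVanish, ← ModuleCat.isZero_iff_subsingleton]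
  refine ⟨fun h => (Module.Baer.of_forall_isZero_ext_one R fun M => h M).injective,
    fun hN M _ _ => ?_⟩
  have := (Module.injective_iff_injective_object R N).1 hN
  exact isZero_ext_one_of_injective R _ _

/-- Every `R`-module is `S`-strongly flat if and only if every `S`-weakly cotorsion
`R`-module is injective. -/
theorem all_stronglyFlat_iff_weaklyCotorsion_injective (S : Submonoid R) :
    (∀ (M : Type u) [AddCommGroup M] [Module R M], IsStronglyFlat R S M) ↔
    (∀ (C : Type u) [AddCommGroup C] [Module R C],
      IsWeaklyCotorsion R S C → Module.Injective R C) :=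
  ⟨fun h C _ _ hC => (forall_extVanish_one_iff_injective R C).1 fun M _ _ => h M C hC,
    fun h _ _ _ C _ _ hC => (forall_extVanish_one_iff_injective R C).2 (h C hC) _⟩
end
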